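/- arXiv:2309.15312 — 3 statements merged into one kernel-verified Lean document; each statement's English description precedes it below -/
import Mathlib

section
/- Fix real hyperparameters ρ¹ > 0 and ρ⁰ > 0 and define ℓ(c¹, c⁰) := B(c¹ + ρ¹, c⁰ + ρ⁰) / B(ρ¹, ρ⁰). Then for all natural numbers a, b ≥ 0: ℓ(a, 0) · ℓ(0, b) ≥ ℓ(a, b). -/
/-- The Beta function `B(x, y) = Γ(x)Γ(y)/Γ(x+y)`. -/
noncomputable def betaFn (x y : ℝ) : ℝ :=
  Real.Gamma x * Real.Gamma y / Real.Gamma (x + y)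

/-- The leaf count likelihood `ℓ(c¹, c⁰) = B(c¹+ρ¹, c⁰+ρ⁰)/B(ρ¹, ρ⁰)`. -/
noncomputable def leafLik (ρ1 ρ0 : ℝ) (c1 c0 : ℕ) : ℝ :=
  betaFn ((c1 : ℝ) + ρ1) ((c0 : ℝ) + ρ0) / betaFn ρ1 ρ0

lemma gamma_add_nat (x : ℝ) (hx : 0 < x) (n : ℕ) :
    Real.Gamma (x + n) = (∏ i ∈ Finset.range n, (x + i)) * Real.Gamma x := by
  induction n with
  | zero => simp
  | succ n ih =>
    have hne : x + (n : ℝ) ≠ 0 := by positivity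
    have : x + ((n : ℕ) + 1 : ℕ) = (x + n) + 1 := by push_cast; ring
    rw [this, Real.Gamma_add_one hne, ih, Finset.prod_range_succ]
    ring

lemma leafLik_eq (ρ1 ρ0 : ℝ) (hρ1 : 0 < ρ1) (hρ0 : 0 < ρ0) (a b : ℕ) :
    leafLik ρ1 ρ0 a b =
      (∏ i ∈ Finset.range a, (ρ1 + i)) * (∏ j ∈ Finset.range b, (ρ0 + j)) /
        (∏ k ∈ Finset.range (a + b), (ρ1 + ρ0 + k)) := by
  have h1 : Real.Gamma ((a : ℝ) + ρ1) = (∏ i ∈ Finset.range a, (ρ1 + i)) * Real.Gamma ρ1 := by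
    rw [add_comm]; exact gamma_add_nat ρ1 hρ1 a
  have h0 : Real.Gamma ((b : ℝ) + ρ0) = (∏ j ∈ Finset.range b, (ρ0 + j)) * Real.Gamma ρ0 := by
    rw [add_comm]; exact gamma_add_nat ρ0 hρ0 b
  have hs : Real.Gamma ((a : ℝ) + ρ1 + ((b : ℝ) + ρ0)) =
      (∏ k ∈ Finset.range (a + b), (ρ1 + ρ0 + k)) * Real.Gamma (ρ1 + ρ0) := by
    have : (a : ℝ) + ρ1 + ((b : ℝ) + ρ0) = (ρ1 + ρ0) + ((a + b : ℕ) : ℝ) := by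
      push_cast; ring
    rw [this]; exact gamma_add_nat (ρ1 + ρ0) (by positivity) (a + b)
  have g1 := Real.Gamma_pos_of_pos hρ1
  have g0 := Real.Gamma_pos_of_pos hρ0
  have gs := Real.Gamma_pos_of_pos (show (0:ℝ) < ρ1 + ρ0 by positivity)
  have gps : (0:ℝ) < ∏ k ∈ Finset.range (a + b), (ρ1 + ρ0 + k) :=
    Finset.prod_pos fun k _ => by positivity
  rw [leafLik, betaFn, betaFn, h1, h0, hs]
  field_simp

/-- **Lemma 13: perfect split lower bound.** `ℓ(a,0)·ℓ(0,b) ≥ ℓ(a,b)`. -/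
theorem leafLik_perfect_split (ρ1 ρ0 : ℝ) (hρ1 : 0 < ρ1) (hρ0 : 0 < ρ0)
    (a b : ℕ) :
    leafLik ρ1 ρ0 a 0 * leafLik ρ1 ρ0 0 b ≥ leafLik ρ1 ρ0 a b := by
  rw [leafLik_eq ρ1 ρ0 hρ1 hρ0 a 0, leafLik_eq ρ1 ρ0 hρ1 hρ0 0 b,
    leafLik_eq ρ1 ρ0 hρ1 hρ0 a b]
  simp only [Finset.range_zero, Finset.prod_empty, Nat.add_zero, Nat.zero_add,
    one_mul, mul_one]
  set P1 := ∏ i ∈ Finset.range a, (ρ1 + (i : ℝ)) with hP1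
  set P0 := ∏ j ∈ Finset.range b, (ρ0 + (j : ℝ)) with hP0
  have hP1pos : 0 < P1 := Finset.prod_pos fun i _ => by positivity
  have hP0pos : 0 < P0 := Finset.prod_pos fun j _ => by positivity
  have hSa : (0:ℝ) < ∏ k ∈ Finset.range a, (ρ1 + ρ0 + k) :=
    Finset.prod_pos fun k _ => by positivity
  have hSb : (0:ℝ) < ∏ k ∈ Finset.range b, (ρ1 + ρ0 + k) :=
    Finset.prod_pos fun k _ => by positivity
  have hSab : (0:ℝ) < ∏ k ∈ Finset.range (a + b), (ρ1 + ρ0 + k) :=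
    Finset.prod_pos fun k _ => by positivity
  have hkey : (∏ k ∈ Finset.range a, (ρ1 + ρ0 + k)) * (∏ k ∈ Finset.range b, (ρ1 + ρ0 + k))
      ≤ ∏ k ∈ Finset.range (a + b), (ρ1 + ρ0 + k) := by
    rw [Finset.prod_range_add]
    refine mul_le_mul_of_nonneg_left ?_ hSa.le
    refine Finset.prod_le_prod (fun k _ => by positivity) (fun k hk => ?_)
    push_cast
    have : (0:ℝ) ≤ a := Nat.cast_nonneg a
    linarith
  rw [ge_iff_le, div_mul_div_comm, div_le_div_iff₀ hSab (by positivity)]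
  calc P1 * P0 * ((∏ k ∈ Finset.range a, (ρ1 + ρ0 + k)) * ∏ k ∈ Finset.range b, (ρ1 + ρ0 + k))
      ≤ P1 * P0 * ∏ k ∈ Finset.range (a + b), (ρ1 + ρ0 + k) := by
        exact mul_le_mul_of_nonneg_left hkey (by positivity)
    _ = P1 * P0 * ∏ k ∈ Finset.range (a + b), (ρ1 + ρ0 + k) := rfl
end

section
/- Fix real hyperparameters ρ¹ > 0 and ρ⁰ > 0 and define ℓ(c¹, c⁰) := B(c¹ + ρ¹, c⁰ + ρ⁰) / B(ρ¹, ρ⁰). Then for all natural numbers c¹₀, c¹₁, c⁰₀, c⁰₁ ≥ 0: ℓ(c¹₀ + c¹₁, 0) · ℓ(0, c⁰₀ + c⁰₁) ≥ ℓ(c¹₀, c⁰₀) · ℓ(c¹₁, c⁰₁). -/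
/-- Rising factorial on the reals. -/
noncomputable def ascR (x : ℝ) (n : ℕ) : ℝ := ∏ i ∈ Finset.range n, (x + i)

lemma ascR_pos {x : ℝ} (hx : 0 < x) (n : ℕ) : 0 < ascR x n :=
  Finset.prod_pos fun i _ => by positivity

lemma Gamma_add_nat' {x : ℝ} (hx : 0 < x) (n : ℕ) :
    Real.Gamma (x + n) = ascR x n * Real.Gamma x := by
  induction n with
  | zero => simp [ascR]
  | succ n ih =>
      have h1 : x + (n + 1 : ℕ) = (x + n) + 1 := by push_cast; ring
      have h2 : x + (n : ℝ) ≠ 0 := by positivity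
      have h3 : ascR x (n + 1) = ascR x n * (x + n) := by
        rw [ascR, ascR, Finset.prod_range_succ]
      rw [h1, Real.Gamma_add_one h2, ih, h3]
      ring

lemma leafLik_eq_s12 (ρ1 ρ0 : ℝ) (hρ1 : 0 < ρ1) (hρ0 : 0 < ρ0) (c1 c0 : ℕ) :
    leafLik ρ1 ρ0 c1 c0 = ascR ρ1 c1 * ascR ρ0 c0 / ascR (ρ1 + ρ0) (c1 + c0) := by
  have h1 : (c1 : ℝ) + ρ1 = ρ1 + c1 := by ring
  have h0 : (c0 : ℝ) + ρ0 = ρ0 + c0 := by ring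
  have hs : (c1 : ℝ) + ρ1 + ((c0 : ℝ) + ρ0) = (ρ1 + ρ0) + ((c1 + c0 : ℕ) : ℝ) := by
    push_cast; ring
  have g1 := Real.Gamma_pos_of_pos hρ1
  have g0 := Real.Gamma_pos_of_pos hρ0
  have gs := Real.Gamma_pos_of_pos (by linarith : (0:ℝ) < ρ1 + ρ0)
  have a1 := ascR_pos hρ1 c1
  have a0 := ascR_pos hρ0 c0
  have as := ascR_pos (by linarith : (0:ℝ) < ρ1 + ρ0) (c1 + c0)
  rw [leafLik, betaFn, betaFn, hs, h1, h0, Gamma_add_nat' hρ1, Gamma_add_nat' hρ0,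
    Gamma_add_nat' (by linarith : (0:ℝ) < ρ1 + ρ0)]
  field_simp

lemma ascR_add (x : ℝ) (m n : ℕ) :
    ascR x (m + n) = ascR x m * ∏ i ∈ Finset.range n, (x + ((m : ℝ) + i)) := by
  rw [ascR, ascR, Finset.prod_range_add]
  congr 1
  apply Finset.prod_congr rfl
  intro i _
  push_cast
  ring

lemma ascR_le_shift {x : ℝ} (hx : 0 < x) (m n : ℕ) :
    ascR x n ≤ ∏ i ∈ Finset.range n, (x + ((m : ℝ) + i)) := by
  apply Finset.prod_le_prod
  · intro i _; positivity
  · intro i _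
    have : (0:ℝ) ≤ m := Nat.cast_nonneg m
    linarith

lemma ascR_mul_le {x : ℝ} (hx : 0 < x) (m n : ℕ) :
    ascR x m * ascR x n ≤ ascR x (m + n) := by
  rw [ascR_add]
  exact mul_le_mul_of_nonneg_left (ascR_le_shift hx m n) (le_of_lt (ascR_pos hx m))

/-- Core lemma: pooling pure leaves increases the likelihood. -/
lemma ascR_key {x s : ℝ} (hx : 0 < x) (hxs : x ≤ s) (a b : ℕ) :
    ascR x a * ascR x b * ascR s (a + b) ≤ ascR x (a + b) * ascR s a * ascR s b := by
  have hs : 0 < s := lt_of_lt_of_le hx hxs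
  set P := ∏ i ∈ Finset.range b, (x + ((a : ℝ) + i)) with hPdef
  set Q := ∏ i ∈ Finset.range b, (s + ((a : ℝ) + i)) with hQdef
  have hPnn : 0 ≤ P := Finset.prod_nonneg fun i _ => by positivity
  have hmain : ascR x b * Q ≤ P * ascR s b := by
    rw [ascR, ascR, hPdef, hQdef, ← Finset.prod_mul_distrib, ← Finset.prod_mul_distrib]
    apply Finset.prod_le_prod
    · intro i _; positivity
    · intro i _
      have ha : (0:ℝ) ≤ (a:ℝ) := Nat.cast_nonneg a
      have hi : (0:ℝ) ≤ (i:ℝ) := Nat.cast_nonneg i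
      nlinarith
  have hxa := le_of_lt (ascR_pos hx a)
  have hsa := le_of_lt (ascR_pos hs a)
  rw [ascR_add x a b, ascR_add s a b, ← hPdef, ← hQdef]
  calc ascR x a * ascR x b * (ascR s a * Q)
      = (ascR x a * ascR s a) * (ascR x b * Q) := by ring
    _ ≤ (ascR x a * ascR s a) * (P * ascR s b) :=
        mul_le_mul_of_nonneg_left hmain (mul_nonneg hxa hsa)
    _ = ascR x a * P * ascR s a * ascR s b := by ring

/-- **Pooled perfect-split domination.** For any split of the counts,
`ℓ(c¹₀+c¹₁, 0)·ℓ(0, c⁰₀+c⁰₁) ≥ ℓ(c¹₀, c⁰₀)·ℓ(c¹₁, c⁰₁)`. -/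
theorem leafLik_pooled_split_dominates (ρ1 ρ0 : ℝ) (hρ1 : 0 < ρ1) (hρ0 : 0 < ρ0)
    (c10 c11 c00 c01 : ℕ) :
    leafLik ρ1 ρ0 (c10 + c11) 0 * leafLik ρ1 ρ0 0 (c00 + c01)
      ≥ leafLik ρ1 ρ0 c10 c00 * leafLik ρ1 ρ0 c11 c01 := by
  have hs : (0:ℝ) < ρ1 + ρ0 := by linarith
  set a := c10; set b := c11; set c := c00; set d := c01
  have p1 := ascR_pos hρ1 a; have p2 := ascR_pos hρ1 b
  have p3 := ascR_pos hρ0 c; have p4 := ascR_pos hρ0 d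
  have p5 := ascR_pos hρ1 (a+b); have p6 := ascR_pos hρ0 (c+d)
  have q1 := ascR_pos hs a; have q2 := ascR_pos hs b
  have q3 := ascR_pos hs c; have q4 := ascR_pos hs d
  have q5 := ascR_pos hs (a+b); have q6 := ascR_pos hs (c+d)
  have q7 := ascR_pos hs (a+c); have q8 := ascR_pos hs (b+d)
  rw [leafLik_eq_s12 ρ1 ρ0 hρ1 hρ0, leafLik_eq_s12 ρ1 ρ0 hρ1 hρ0, leafLik_eq_s12 ρ1 ρ0 hρ1 hρ0,
    leafLik_eq_s12 ρ1 ρ0 hρ1 hρ0]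
  have h0 : ∀ x : ℝ, ascR x 0 = 1 := fun x => by simp [ascR]
  rw [h0, h0, Nat.add_zero, Nat.zero_add, mul_one, one_mul]
  rw [ge_iff_le, div_mul_div_comm, div_mul_div_comm,
    div_le_div_iff₀ (mul_pos q7 q8) (mul_pos q5 q6)]
  have k1 := ascR_key hρ1 (by linarith : ρ1 ≤ ρ1 + ρ0) a b
  have k0 := ascR_key hρ0 (by linarith : ρ0 ≤ ρ1 + ρ0) c d
  have m1 := ascR_mul_le hs a c
  have m2 := ascR_mul_le hs b d
  calc ascR ρ1 a * ascR ρ0 c * (ascR ρ1 b * ascR ρ0 d) * (ascR (ρ1+ρ0) (a+b) * ascR (ρ1+ρ0) (c+d))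
      = (ascR ρ1 a * ascR ρ1 b * ascR (ρ1+ρ0) (a+b)) * (ascR ρ0 c * ascR ρ0 d * ascR (ρ1+ρ0) (c+d)) := by ring
    _ ≤ (ascR ρ1 (a+b) * ascR (ρ1+ρ0) a * ascR (ρ1+ρ0) b) * (ascR ρ0 (c+d) * ascR (ρ1+ρ0) c * ascR (ρ1+ρ0) d) :=
        mul_le_mul k1 k0 (by positivity) (by positivity)
    _ = (ascR ρ1 (a+b) * ascR ρ0 (c+d)) * ((ascR (ρ1+ρ0) a * ascR (ρ1+ρ0) c) * (ascR (ρ1+ρ0) b * ascR (ρ1+ρ0) d)) := by ring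
    _ ≤ (ascR ρ1 (a+b) * ascR ρ0 (c+d)) * (ascR (ρ1+ρ0) (a+c) * ascR (ρ1+ρ0) (b+d)) := by
        apply mul_le_mul_of_nonneg_left _ (by positivity)
        exact mul_le_mul m1 m2 (by positivity) (by positivity)
end

section
/- Fix real hyperparameters ρ¹ > 0 and ρ⁰ > 0 and define ℓ(c¹, c⁰) := B(c¹ + ρ¹, c⁰ + ρ⁰) / B(ρ¹, ρ⁰). Then for all natural numbers c¹₀, c¹₁, c⁰₀, c⁰₁ ≥ 0 and every real q with 0 < q ≤ 1: ℓ(c¹₀ + c¹₁, 0) · ℓ(0, c⁰₀ + c⁰₁) ≥ q² · ℓ(c¹₀, 0) · ℓ(0, c⁰₀) · ℓ(c¹₁, 0) · ℓ(0, c⁰₁). -/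
noncomputable def rprod (x y : ℝ) (c : ℕ) : ℝ :=
  ∏ k ∈ Finset.range c, (x + k) / (x + y + k)

lemma gamma_nat_add (x : ℝ) (hx : 0 < x) (c : ℕ) :
    Real.Gamma ((c : ℝ) + x) = (∏ k ∈ Finset.range c, (x + k)) * Real.Gamma x := by
  induction c with
  | zero => simp
  | succ n ih =>
    have h1 : ((n + 1 : ℕ) : ℝ) + x = ((n : ℝ) + x) + 1 := by push_cast; ring
    have h2 : (n : ℝ) + x ≠ 0 := by positivity
    rw [h1, Real.Gamma_add_one h2, ih, Finset.prod_range_succ]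
    ring

lemma rprod_pos (x y : ℝ) (hx : 0 < x) (hy : 0 < y) (c : ℕ) : 0 < rprod x y c := by
  apply Finset.prod_pos
  intro k _
  have : (0:ℝ) ≤ (k:ℝ) := Nat.cast_nonneg k
  positivity

lemma rprod_le_one (x y : ℝ) (hx : 0 < x) (hy : 0 < y) (c : ℕ) : rprod x y c ≤ 1 := by
  apply Finset.prod_le_one
  · intro k _
    have : (0:ℝ) ≤ (k:ℝ) := Nat.cast_nonneg k
    positivity
  · intro k _
    have : (0:ℝ) ≤ (k:ℝ) := Nat.cast_nonneg k
    rw [div_le_one (by positivity)]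
    linarith

lemma rprod_superadd (x y : ℝ) (hx : 0 < x) (hy : 0 < y) (a b : ℕ) :
    rprod x y a * rprod x y b ≤ rprod x y (a + b) := by
  simp only [rprod]
  rw [Finset.prod_range_add]
  have h1 : rprod x y b ≤ ∏ k ∈ Finset.range b, (x + ((a : ℝ) + k)) / (x + y + ((a : ℝ) + k)) := by
    apply Finset.prod_le_prod
    · intro k _
      have : (0:ℝ) ≤ (k:ℝ) := Nat.cast_nonneg k
      positivity
    · intro k _
      have hk : (0:ℝ) ≤ (k:ℝ) := Nat.cast_nonneg k
      have ha : (0:ℝ) ≤ (a:ℝ) := Nat.cast_nonneg a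
      rw [div_le_div_iff₀ (by positivity) (by positivity)]
      nlinarith
  calc rprod x y a * rprod x y b
      ≤ rprod x y a * ∏ k ∈ Finset.range b, (x + ((a : ℝ) + k)) / (x + y + ((a : ℝ) + k)) := by
        exact mul_le_mul_of_nonneg_left h1 (le_of_lt (rprod_pos x y hx hy a))
    _ = _ := by
        rw [rprod]
        congr 1
        apply Finset.prod_congr rfl
        intro k _
        push_cast
        ring_nf

lemma leafLik_left (ρ1 ρ0 : ℝ) (hρ1 : 0 < ρ1) (hρ0 : 0 < ρ0) (c : ℕ) :
    leafLik ρ1 ρ0 c 0 = rprod ρ1 ρ0 c := by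
  have g1 : Real.Gamma ((c : ℝ) + ρ1) = (∏ k ∈ Finset.range c, (ρ1 + k)) * Real.Gamma ρ1 :=
    gamma_nat_add ρ1 hρ1 c
  have g2 : Real.Gamma ((c : ℝ) + ρ1 + ρ0) = (∏ k ∈ Finset.range c, (ρ1 + ρ0 + k)) * Real.Gamma (ρ1 + ρ0) := by
    have := gamma_nat_add (ρ1 + ρ0) (by linarith) c
    rw [← this]; ring_nf
  have p1 : (0:ℝ) < Real.Gamma ρ1 := Real.Gamma_pos_of_pos hρ1
  have p0 : (0:ℝ) < Real.Gamma ρ0 := Real.Gamma_pos_of_pos hρ0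
  have p01 : (0:ℝ) < Real.Gamma (ρ1 + ρ0) := Real.Gamma_pos_of_pos (by linarith)
  have pP : (0:ℝ) < ∏ k ∈ Finset.range c, (ρ1 + ρ0 + k) := by
    apply Finset.prod_pos; intro k _
    have : (0:ℝ) ≤ (k:ℝ) := Nat.cast_nonneg k
    positivity
  rw [leafLik, betaFn, betaFn, rprod, Finset.prod_div_distrib]
  rw [show ((0:ℕ):ℝ) + ρ0 = ρ0 by simp, g1, g2]
  field_simp
  
lemma leafLik_right (ρ1 ρ0 : ℝ) (hρ1 : 0 < ρ1) (hρ0 : 0 < ρ0) (c : ℕ) :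
    leafLik ρ1 ρ0 0 c = rprod ρ0 ρ1 c := by
  have g1 : Real.Gamma ((c : ℝ) + ρ0) = (∏ k ∈ Finset.range c, (ρ0 + k)) * Real.Gamma ρ0 :=
    gamma_nat_add ρ0 hρ0 c
  have g2 : Real.Gamma (ρ1 + ((c : ℝ) + ρ0)) = (∏ k ∈ Finset.range c, (ρ0 + ρ1 + k)) * Real.Gamma (ρ0 + ρ1) := by
    have := gamma_nat_add (ρ0 + ρ1) (by linarith) c
    rw [← this]; ring_nf
  have p1 : (0:ℝ) < Real.Gamma ρ1 := Real.Gamma_pos_of_pos hρ1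
  have p0 : (0:ℝ) < Real.Gamma ρ0 := Real.Gamma_pos_of_pos hρ0
  have p01 : (0:ℝ) < Real.Gamma (ρ0 + ρ1) := Real.Gamma_pos_of_pos (by linarith)
  have pP : (0:ℝ) < ∏ k ∈ Finset.range c, (ρ0 + ρ1 + k) := by
    apply Finset.prod_pos; intro k _
    have : (0:ℝ) ≤ (k:ℝ) := Nat.cast_nonneg k
    positivity
  rw [leafLik, betaFn, betaFn, rprod, Finset.prod_div_distrib]
  rw [show ((0:ℕ):ℝ) + ρ1 = ρ1 by simp, g1, g2, show ρ1 + ρ0 = ρ0 + ρ1 by ring]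
  field_simp

/-- **Discounted pooled perfect-split domination.** For any split of the counts
and any `q ∈ (0,1]`:
`ℓ(c¹₀+c¹₁, 0)·ℓ(0, c⁰₀+c⁰₁) ≥ q²·ℓ(c¹₀,0)·ℓ(0,c⁰₀)·ℓ(c¹₁,0)·ℓ(0,c⁰₁)`. -/
theorem leafLik_pooled_split_dominates_discounted
    (ρ1 ρ0 : ℝ) (hρ1 : 0 < ρ1) (hρ0 : 0 < ρ0)
    (c10 c11 c00 c01 : ℕ) (q : ℝ) (hq0 : 0 < q) (hq1 : q ≤ 1) :
    leafLik ρ1 ρ0 (c10 + c11) 0 * leafLik ρ1 ρ0 0 (c00 + c01)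
      ≥ q ^ 2 * leafLik ρ1 ρ0 c10 0 * leafLik ρ1 ρ0 0 c00
          * leafLik ρ1 ρ0 c11 0 * leafLik ρ1 ρ0 0 c01 := by
  rw [leafLik_left ρ1 ρ0 hρ1 hρ0, leafLik_right ρ1 ρ0 hρ1 hρ0,
      leafLik_left ρ1 ρ0 hρ1 hρ0, leafLik_right ρ1 ρ0 hρ1 hρ0,
      leafLik_left ρ1 ρ0 hρ1 hρ0, leafLik_right ρ1 ρ0 hρ1 hρ0]
  have hA := rprod_superadd ρ1 ρ0 hρ1 hρ0 c10 c11
  have hB := rprod_superadd ρ0 ρ1 hρ0 hρ1 c00 c01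
  have pA0 := rprod_pos ρ1 ρ0 hρ1 hρ0 c10
  have pA1 := rprod_pos ρ1 ρ0 hρ1 hρ0 c11
  have pB0 := rprod_pos ρ0 ρ1 hρ0 hρ1 c00
  have pB1 := rprod_pos ρ0 ρ1 hρ0 hρ1 c01
  have hq2 : q ^ 2 ≤ 1 := by nlinarith
  have hq2' : 0 < q ^ 2 := by positivity
  calc q ^ 2 * rprod ρ1 ρ0 c10 * rprod ρ0 ρ1 c00 * rprod ρ1 ρ0 c11 * rprod ρ0 ρ1 c01
      ≤ rprod ρ1 ρ0 c10 * rprod ρ0 ρ1 c00 * rprod ρ1 ρ0 c11 * rprod ρ0 ρ1 c01 := by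
        nlinarith [mul_pos (mul_pos (mul_pos pA0 pB0) pA1) pB1]
    _ = (rprod ρ1 ρ0 c10 * rprod ρ1 ρ0 c11) * (rprod ρ0 ρ1 c00 * rprod ρ0 ρ1 c01) := by ring
    _ ≤ rprod ρ1 ρ0 (c10 + c11) * rprod ρ0 ρ1 (c00 + c01) := by
        apply mul_le_mul hA hB (by positivity) (le_of_lt (rprod_pos ρ1 ρ0 hρ1 hρ0 _))
end
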